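/- Every Hausdorff topological space with a countable network admits a continuous bijection onto a Hausdorff space with a countable base. -/

import Mathlib

/-!
For each pair of network members that lie in disjoint open sets, fix such a pair of open
sets. Countably many open sets arise, and since any two distinct points lie in network
members inside disjoint open neighbourhoods, they already separate points. The topology
they generate is therefore Hausdorff, second countable and coarser than the original one,
so the identity map is the required condensation.
-/

open TopologicalSpace

lemma t2Space_generateFrom {X : Type*} {S : Set (Set X)}
    (hS : ∀ x y : X, x ≠ y → ∃ u ∈ S, ∃ v ∈ S, x ∈ u ∧ y ∈ v ∧ Disjoint u v) :
    @T2Space X (generateFrom S) :=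
  @T2Space.mk X (generateFrom S) fun x y hxy =>
    let ⟨u, hu, v, hv, hxu, hyv, huv⟩ := hS x y hxy
    ⟨u, v, isOpen_generateFrom_of_mem hu, isOpen_generateFrom_of_mem hv, hxu, hyv, huv⟩

variable {X : Type*} [TopologicalSpace X]

def IsNetwork (N : Set (Set X)) : Prop :=
  ∀ (x : X) (U : Set X), IsOpen U → x ∈ U → ∃ n ∈ N, x ∈ n ∧ n ⊆ U

lemma IsNetwork.exists_countable_open_separating [T2Space X] {N : Set (Set X)}
    (hN : IsNetwork N) (hNc : N.Countable) :
    ∃ S : Set (Set X), S.Countable ∧ (∀ s ∈ S, IsOpen s) ∧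
      ∀ x y : X, x ≠ y → ∃ u ∈ S, ∃ v ∈ S, x ∈ u ∧ y ∈ v ∧ Disjoint u v := by
  let T : Set (Set X × Set X) := {p | p ∈ N ×ˢ N ∧
    ∃ U V : Set X, IsOpen U ∧ IsOpen V ∧ p.1 ⊆ U ∧ p.2 ⊆ V ∧ Disjoint U V}
  have : Countable T := ((hNc.prod hNc).mono fun _ hp => hp.1).to_subtype
  choose U V hU hV hpU hpV hUV using fun p : T => p.2.2
  refine ⟨Set.range U ∪ Set.range V, (Set.countable_range U).union (Set.countable_range V),
    ?_, fun x y hxy => ?_⟩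
  · rintro s (⟨p, rfl⟩ | ⟨p, rfl⟩)
    exacts [hU p, hV p]
  obtain ⟨u, v, hu, hv, hxu, hyv, huv⟩ := t2_separation hxy
  obtain ⟨M, hM, hxM, hMu⟩ := hN x u hu hxu
  obtain ⟨M', hM', hyM', hM'v⟩ := hN y v hv hyv
  let p : T := ⟨(M, M'), ⟨hM, hM'⟩, u, v, hu, hv, hMu, hM'v, huv⟩
  exact ⟨U p, .inl ⟨p, rfl⟩, V p, .inr ⟨p, rfl⟩, hpU p hxM, hpV p hyM', hUV p⟩

/-- Arhangel'skii–Ponomarev: every Hausdorff space with a countable network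
condenses (admits a continuous bijection) onto a Hausdorff second countable
space. -/
theorem stmt_12 {X : Type} [TopologicalSpace X] [T2Space X]
    (N : Set (Set X)) (hNc : N.Countable)
    (hN : ∀ (x : X) (U : Set X), IsOpen U → x ∈ U → ∃ n ∈ N, x ∈ n ∧ n ⊆ U) :
    ∃ (Y : Type) (tY : TopologicalSpace Y),
      @T2Space Y tY ∧ @SecondCountableTopology Y tY ∧
      ∃ g : X → Y, @Continuous X Y _ tY g ∧ Function.Bijective g := by
  obtain ⟨S, hSc, hSopen, hSsep⟩ :=
    IsNetwork.exists_countable_open_separating hN hNc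
  exact ⟨X, generateFrom S, t2Space_generateFrom hSsep,
    @SecondCountableTopology.mk X (generateFrom S) ⟨S, hSc, rfl⟩, id,
    continuous_id_iff_le.mpr (le_generateFrom hSopen), Function.bijective_id⟩
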